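/- arXiv:1604.07188 — 2 statements merged into one kernel-verified Lean document; each statement's English description precedes it below -/
import Mathlib

section
/- Let 0 < α < 1, x > 0 and n ≥ 2 be an integer, and set h = x/n. For the function y(t) = t, whose Caputo derivative of order α at x equals x^{1−α}/Γ(2−α), one has the exact identity (1/(Γ(1−α) h^α)) ∑_{k=0}^{n} σ̄_k · (n−k)h − x^{1−α}/Γ(2−α) = h^{1−α} W_n / Γ(1−α). -/
open Finset

/-- Real values of the Riemann zeta function (real part of the analytic continuation). -/
noncomputable def zetaR (s : ℝ) : ℝ := (riemannZeta (s : ℂ)).re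

/-- Caputo derivative of order `α` (for `0 < α < 1`). -/
noncomputable def caputo (α : ℝ) (y : ℝ → ℝ) (x : ℝ) : ℝ :=
  (1 / Real.Gamma (1 - α)) * ∫ t in (0:ℝ)..x, deriv y t * (x - t) ^ (-α)

/-- Weights `ω_k` of the midpoint-based approximation. -/
noncomputable def wgt (α : ℝ) (n k : ℕ) : ℝ :=
  if k = 0 then (2:ℝ) ^ α
  else if k = n then -((2:ℝ) ^ α) * (2 * (n:ℝ) - 1) ^ (-α)
  else (2:ℝ) ^ α * ((2 * (k:ℝ) + 1) ^ (-α) - (2 * (k:ℝ) - 1) ^ (-α))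

/-- Weights `σ̄_k` of the order `2 - α` approximation (before endpoint correction). -/
noncomputable def sigmab (α : ℝ) (n k : ℕ) : ℝ :=
  if k = 0 then wgt α n 0 - ((2:ℝ) ^ α - 1) * zetaR α
  else if k = 1 then wgt α n 1 + ((2:ℝ) ^ α - 1) * zetaR α
  else wgt α n k

/-- The quantity `W_n`. -/
noncomputable def Wn (α : ℝ) (n : ℕ) : ℝ :=
  zetaR α - (n:ℝ) ^ (1 - α) / (1 - α) +
    (2:ℝ) ^ α * ((∑ k ∈ Finset.Icc 1 n, (2 * (k:ℝ) - 1) ^ (-α)) - zetaR α)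

/-- Weights `σ_k` of the order `2 - α` approximation. -/
noncomputable def sigmaw (α : ℝ) (n k : ℕ) : ℝ :=
  if k = n - 1 then sigmab α n k - Wn α n
  else if k = n then sigmab α n k + Wn α n
  else sigmab α n k

/-- Weights `δ̄_k` of the second-order approximation (before endpoint correction). -/
noncomputable def deltab (α : ℝ) (n k : ℕ) : ℝ :=
  if k = 0 then wgt α n 0 + (3/2) * (1 - (2:ℝ) ^ α) * zetaR α + ((2:ℝ) ^ (α - 1) - 1) * zetaR (α - 1)
  else if k = 1 then wgt α n 1 - 2 * (1 - (2:ℝ) ^ α) * zetaR α - 2 * ((2:ℝ) ^ (α - 1) - 1) * zetaR (α - 1)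
  else if k = 2 then wgt α n 2 + (1/2) * (1 - (2:ℝ) ^ α) * zetaR α + ((2:ℝ) ^ (α - 1) - 1) * zetaR (α - 1)
  else wgt α n k

/-- Weights `δ_k` of the second-order approximation. -/
noncomputable def deltaw (α : ℝ) (n k : ℕ) : ℝ :=
  if k = n - 1 then deltab α n k - Wn α n
  else if k = n then deltab α n k + Wn α n
  else deltab α n k


/-! The weights `ω_k` are the backward differences of `a_k = 2^α (2k+1)^{-α}` (with `a_{-1} = 0`),
so summation by parts turns `∑ ω_k (n - k)` into `∑_{k<n} a_k = 2^α ∑_{k=1}^n (2k-1)^{-α}`.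
The `ζ`-corrections of `σ̄₀` and `σ̄₁` contribute `-(2^α - 1) ζ(α)` in total, and what remains is
the definition of `W_n` together with `x = n h` and `Γ(2 - α) = (1 - α) Γ(1 - α)`. -/

theorem sum_range_mul_sub_eq_sum_sum_range {R : Type*} [CommRing R] (c : ℕ → R) (n : ℕ) :
    ∑ k ∈ range (n + 1), c k * ((n : R) - k) = ∑ j ∈ range n, ∑ k ∈ range (j + 1), c k := by
  induction n with
  | zero => simp
  | succ n ih =>
    rw [sum_range_succ _ (n + 1), sum_range_succ (fun j => ∑ k ∈ range (j + 1), c k), ← ih,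
      ← sum_add_distrib]
    push_cast
    rw [sub_self, mul_zero, add_zero]
    exact sum_congr rfl fun k _ => by ring

theorem sum_range_wgt (α : ℝ) {n j : ℕ} (hj : j < n) :
    ∑ k ∈ range (j + 1), wgt α n k = 2 ^ α * (2 * (j : ℝ) + 1) ^ (-α) := by
  induction j with
  | zero => simp [wgt]
  | succ j ih =>
    rw [sum_range_succ, ih (by omega), wgt, if_neg j.succ_ne_zero, if_neg hj.ne]
    push_cast
    ring_nf

theorem sum_wgt_mul_sub (α : ℝ) (n : ℕ) :
    ∑ k ∈ range (n + 1), wgt α n k * ((n : ℝ) - k) =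
      2 ^ α * ∑ k ∈ Icc 1 n, (2 * (k : ℝ) - 1) ^ (-α) := by
  rw [sum_range_mul_sub_eq_sum_sum_range, sum_congr rfl fun j hj => sum_range_wgt α (mem_range.1 hj),
    mul_sum, ← Ico_add_one_right_eq_Icc, sum_Ico_eq_sum_range, Nat.add_sub_cancel]
  refine sum_congr rfl fun j _ => ?_
  push_cast
  ring_nf

theorem sum_sigmab_mul_sub (α : ℝ) {n : ℕ} (hn : 1 ≤ n) :
    ∑ k ∈ range (n + 1), sigmab α n k * ((n : ℝ) - k) =
      ∑ k ∈ range (n + 1), wgt α n k * ((n : ℝ) - k) - (2 ^ α - 1) * zetaR α := by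
  obtain ⟨m, rfl⟩ := Nat.exists_eq_add_of_le' hn
  simp only [sum_range_succ' _ (m + 1), sum_range_succ' _ m, sigmab, Nat.add_eq_zero_iff,
    Nat.add_eq_right, one_ne_zero, and_false, ↓reduceIte, Nat.cast_add, Nat.cast_one, Nat.cast_zero]
  ring

theorem Wn_add_rpow_div (α : ℝ) (n : ℕ) :
    Wn α n + (n : ℝ) ^ (1 - α) / (1 - α) =
      2 ^ α * ∑ k ∈ Icc 1 n, (2 * (k : ℝ) - 1) ^ (-α) - (2 ^ α - 1) * zetaR α := by
  rw [Wn]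
  ring

theorem stmt4_general (α x : ℝ) (hα1 : α < 1) (hx : 0 < x)
    (n : ℕ) (hn : 2 ≤ n) (h : ℝ) (hh : h = x / n) :
    (1 / (Real.Gamma (1 - α) * h ^ α)) *
        (∑ k ∈ Finset.range (n + 1), sigmab α n k * (((n:ℝ) - k) * h)) -
      x ^ (1 - α) / Real.Gamma (2 - α) =
    h ^ (1 - α) * Wn α n / Real.Gamma (1 - α) := by
  have hn0 : (0 : ℝ) < n := Nat.cast_pos.2 (by omega)
  have hh0 : 0 < h := hh ▸ div_pos hx hn0
  have hsum : ∑ k ∈ range (n + 1), sigmab α n k * (((n : ℝ) - k) * h) =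
      h * (Wn α n + (n : ℝ) ^ (1 - α) / (1 - α)) := by
    simp_rw [← mul_assoc, ← sum_mul, sum_sigmab_mul_sub α (by omega : 1 ≤ n), sum_wgt_mul_sub,
      Wn_add_rpow_div, mul_comm]
  have hx_rpow : x ^ (1 - α) = h ^ (1 - α) * (n : ℝ) ^ (1 - α) := by
    rw [← Real.mul_rpow hh0.le hn0.le, hh, div_mul_cancel₀ x hn0.ne']
  have hΓ : Real.Gamma (2 - α) = (1 - α) * Real.Gamma (1 - α) := by
    rw [← Real.Gamma_add_one (by linarith)]
    ring_nf
  rw [hsum, hx_rpow, hΓ, Real.rpow_sub hh0, Real.rpow_one]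
  field_simp
  ring

theorem stmt4 (α x : ℝ) (hα0 : 0 < α) (hα1 : α < 1) (hx : 0 < x)
    (n : ℕ) (hn : 2 ≤ n) (h : ℝ) (hh : h = x / n) :
    (1 / (Real.Gamma (1 - α) * h ^ α)) *
        (∑ k ∈ Finset.range (n + 1), sigmab α n k * (((n:ℝ) - k) * h)) -
      x ^ (1 - α) / Real.Gamma (2 - α) =
    h ^ (1 - α) * Wn α n / Real.Gamma (1 - α) :=
  stmt4_general α x hα1 hx n hn h hh
end

section
/- Let 0 < α < 1. Then for every positive integer m, 2^α (2m−1)^{−α} − W_m > 1/(2 m^{α}). In particular, the weight σ_m of the order-(2−α) approximation, whose value is σ_m = −2^α (2m−1)^{−α} + W_m, satisfies |σ_m| > 1/(2 m^{α}). -/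
open Finset

/-!
Let `E N = ∑_{n ≤ N} n^{-α} - N^{1-α}/(1-α)`. The series
`∑ ((n+1)^{-s} - ∫_n^{n+1} x^{-s} dx)` is holomorphic on `0 < re s`, `s ≠ 1`, and equals `ζ s` for `1 < re s`, so by analytic
continuation `E N → ζ(α)`. As `x^{-α}` is decreasing and convex, the increment
`E (N+1) - E N = (N+1)^{-α} - ∫_N^{N+1} x^{-α} dx` lies between `-(N^{-α} - (N+1)^{-α})/2`
and `0`, hence `0 ≤ E N - ζ(α) ≤ N^{-α}/2` for `N ≥ 1`. Separating odd and even terms,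
`W_m = 2^α (E (2m) - ζ(α)) - (E m - ζ(α)) ≤ 2^α (2m)^{-α}/2 = m^{-α}/2`,
while `2^α (2m-1)^{-α} > 2^α (2m)^{-α} = m^{-α}`.
-/

open Complex Filter Topology Set MeasureTheory

/-- `(n + 1) ^ (-s) - ∫ x in n..n + 1, x ^ (-s)`, in a closed form that makes sense for all
`s ≠ 1`. -/
noncomputable def zetaTerm (s : ℂ) (n : ℕ) : ℂ :=
  ((n : ℂ) + 1) ^ (-s) - (((n : ℂ) + 1) ^ (1 - s) - (n : ℂ) ^ (1 - s)) / (1 - s)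

lemma sum_range_zetaTerm {s : ℂ} (hs : s ≠ 1) (N : ℕ) :
    ∑ n ∈ range N, zetaTerm s n =
      ∑ n ∈ range N, ((n : ℂ) + 1) ^ (-s) - (N : ℂ) ^ (1 - s) / (1 - s) := by
  have htel := sum_range_sub (fun n : ℕ => (n : ℂ) ^ (1 - s)) N
  push_cast at htel
  simp only [zetaTerm, sum_sub_distrib, ← sum_div, htel, zero_cpow (sub_ne_zero.2 hs.symm),
    sub_zero]

lemma zetaTerm_eq_sub_integral {s : ℂ} (hs : s ≠ 1) {n : ℕ} (hn : n ≠ 0) :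
    zetaTerm s n = ((n : ℂ) + 1) ^ (-s) - ∫ x in (n : ℝ)..n + 1, (x : ℂ) ^ (-s) := by
  have hn1 : (1 : ℝ) ≤ n := by exact_mod_cast Nat.one_le_iff_ne_zero.2 hn
  rw [integral_cpow (Or.inr ⟨by simpa [neg_inj] using hs, fun h0 => ?_⟩), zetaTerm]
  · push_cast
    ring_nf
  · rw [Set.uIcc_of_le (by linarith)] at h0
    linarith [h0.1]

lemma norm_ofReal_cpow_sub_le {s : ℂ} (hs : -1 ≤ s.re) {a x y : ℝ} (ha : 0 < a)
    (hx : a ≤ x) (hy : a ≤ y) :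
    ‖(y : ℂ) ^ (-s) - (x : ℂ) ^ (-s)‖ ≤ ‖s‖ * a ^ (-s.re - 1) * ‖y - x‖ := by
  rcases eq_or_ne s 0 with rfl | hs0
  · simp
  refine Convex.norm_image_sub_le_of_norm_hasDerivWithin_le
    (f := fun t : ℝ => (t : ℂ) ^ (-s)) (f' := fun t => -s * (t : ℂ) ^ (-s - 1))
    (fun t ht => ?_) (fun t ht => ?_) (convex_Ici a) hx hy
  · exact (hasDerivAt_ofReal_cpow_const (by linarith [ht.out]) (neg_ne_zero.2 hs0))
      |>.hasDerivWithinAt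
  · rw [norm_mul, norm_neg, norm_cpow_eq_rpow_re_of_pos (ha.trans_le ht),
      show (-s - 1).re = -s.re - 1 by simp]
    exact mul_le_mul_of_nonneg_left (Real.rpow_le_rpow_of_nonpos ha ht (by linarith))
      (norm_nonneg s)

lemma norm_zetaTerm_le {s : ℂ} (hs : -1 ≤ s.re) (hs1 : s ≠ 1) {n : ℕ} (hn : n ≠ 0) :
    ‖zetaTerm s n‖ ≤ ‖s‖ * (n : ℝ) ^ (-s.re - 1) := by
  have hn0 : (0 : ℝ) < n := by positivity
  have hint : IntervalIntegrable (fun x : ℝ => (x : ℂ) ^ (-s)) volume n (n + 1) :=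
    intervalIntegral.intervalIntegrable_cpow (Or.inr fun h => by
      rw [Set.uIcc_of_le (by linarith)] at h; linarith [h.1])
  have hrepr : zetaTerm s n =
      ∫ x in (n : ℝ)..n + 1, ((((n : ℝ) + 1 : ℝ) : ℂ) ^ (-s) - (x : ℂ) ^ (-s)) := by
    rw [intervalIntegral.integral_sub intervalIntegrable_const hint,
      intervalIntegral.integral_const, zetaTerm_eq_sub_integral hs1 hn]
    push_cast
    simp
  rw [hrepr]
  refine (intervalIntegral.norm_integral_le_of_norm_le_const
    (C := ‖s‖ * (n : ℝ) ^ (-s.re - 1)) fun x hx => ?_).trans_eq (by simp)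
  rw [Set.uIoc_of_le (by linarith)] at hx
  calc _ ≤ ‖s‖ * (n : ℝ) ^ (-s.re - 1) * ‖(n : ℝ) + 1 - x‖ :=
        norm_ofReal_cpow_sub_le hs hn0 hx.1.le (by linarith)
    _ ≤ ‖s‖ * (n : ℝ) ^ (-s.re - 1) := by
        refine mul_le_of_le_one_right (by positivity) ?_
        rw [Real.norm_eq_abs, abs_le]
        constructor <;> linarith [hx.1, hx.2]

lemma differentiableAt_zetaTerm {s : ℂ} (hs : s ≠ 1) (n : ℕ) :
    DifferentiableAt ℂ (fun s => zetaTerm s n) s := by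
  have hs' : 1 - s ≠ 0 := sub_ne_zero.2 hs.symm
  have hn : (n : ℂ) + 1 ≠ 0 := by exact_mod_cast n.succ_ne_zero
  have hlin : DifferentiableAt ℂ (fun s : ℂ => 1 - s) s := by fun_prop
  exact (differentiableAt_neg_iff.2 differentiableAt_id |>.const_cpow (Or.inl hn)).sub
    (((hlin.const_cpow (Or.inl hn)).sub (hlin.const_cpow (Or.inr hs'))).div hlin hs')

lemma summable_zetaTerm {s : ℂ} (hs : 0 < s.re) (hs1 : s ≠ 1) : Summable (zetaTerm s) :=
  .of_norm_bounded_eventually_nat ((Real.summable_nat_rpow.2 (by linarith)).mul_left ‖s‖)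
    (eventually_ne_atTop 0 |>.mono fun _ hn => norm_zetaTerm_le (by linarith) hs1 hn)

lemma differentiableOn_tsum_zetaTerm :
    DifferentiableOn ℂ (fun s => ∑' n, zetaTerm s n) {s | 0 < s.re ∧ s ≠ 1} := by
  rintro s₀ ⟨hre, hs₀⟩
  set V := {s : ℂ | s₀.re / 2 < s.re ∧ ‖s‖ < ‖s₀‖ + 1 ∧ s ≠ 1}
  have hV : IsOpen V :=
    (isOpen_lt continuous_const continuous_re).inter
      ((isOpen_lt continuous_norm continuous_const).inter isOpen_ne)
  have hs₀V : s₀ ∈ V := ⟨by linarith, by linarith, hs₀⟩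
  -- the term `n = 0` is not bounded uniformly near `s = 1`, so it is split off
  have htail : DifferentiableOn ℂ (fun s => ∑' n, zetaTerm s (n + 1)) V := by
    refine differentiableOn_tsum_of_summable_norm
      (u := fun n : ℕ => (‖s₀‖ + 1) * ((n + 1 : ℕ) : ℝ) ^ (-(s₀.re / 2) - 1))
      (((summable_nat_add_iff 1).2 (Real.summable_nat_rpow.2 (by linarith))).mul_left _)
      (fun n s hs => (differentiableAt_zetaTerm hs.2.2 _).differentiableWithinAt) hV
      fun n s hs => (norm_zetaTerm_le (by linarith [hs.1]) hs.2.2 n.succ_ne_zero).trans ?_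
    gcongr
    · exact hs.2.1.le
    · exact_mod_cast n.succ_pos
    · linarith [hs.1]
  have hsplit : ∀ s ∈ V, ∑' n, zetaTerm s n = zetaTerm s 0 + ∑' n, zetaTerm s (n + 1) :=
    fun s hs => (summable_zetaTerm (by linarith [hs.1]) hs.2.2).tsum_eq_zero_add
  refine DifferentiableAt.differentiableWithinAt ?_
  exact ((differentiableAt_zetaTerm hs₀ 0).add (htail.differentiableAt (hV.mem_nhds hs₀V)))
    |>.congr_of_eventuallyEq (eventually_of_mem (hV.mem_nhds hs₀V) hsplit)

lemma tsum_zetaTerm_of_one_lt_re {s : ℂ} (hs : 1 < s.re) :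
    ∑' n, zetaTerm s n = riemannZeta s := by
  have hs1 : s ≠ 1 := by rintro rfl; simp at hs
  have hzeta : HasSum (fun n : ℕ => ((n : ℂ) + 1) ^ (-s)) (riemannZeta s) := by
    have hsum := (summable_nat_add_iff 1).2 (Complex.summable_one_div_nat_cpow.2 hs)
    simp only [cpow_neg, ← one_div]
    push_cast at hsum
    exact zeta_eq_tsum_one_div_nat_add_one_cpow hs ▸ hsum.hasSum
  have hpow : Tendsto (fun N : ℕ => (N : ℂ) ^ (1 - s) / (1 - s)) atTop (𝓝 0) := by
    rw [← zero_div (1 - s)]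
    refine (tendsto_zero_iff_norm_tendsto_zero.2 ?_).div_const _
    simp_rw [norm_natCast_cpow_of_re_ne_zero _ (show (1 - s).re ≠ 0 by simp; linarith)]
    have := (tendsto_rpow_neg_atTop (y := s.re - 1) (by linarith)).comp tendsto_natCast_atTop_atTop
    simpa [Function.comp_def] using this
  refine tendsto_nhds_unique (summable_zetaTerm (by linarith) hs1).hasSum.tendsto_sum_nat ?_
  simpa [sum_range_zetaTerm hs1] using hzeta.tendsto_sum_nat.sub hpow

lemma tsum_zetaTerm_eq_riemannZeta {s : ℂ} (hs₀ : 0 < s.re) (hs₁ : s.re - s.im < 1) :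
    ∑' n, zetaTerm s n = riemannZeta s := by
  -- open and convex, avoids the pole, contains `(0, 1)` and meets `1 < re s`
  set D := {s : ℂ | 0 < s.re ∧ s.re - s.im < 1}
  have hD : IsOpen D := (isOpen_lt continuous_const continuous_re).inter
    (isOpen_lt (continuous_re.sub continuous_im) continuous_const)
  have hDconv : Convex ℝ D := (convex_halfSpace_re_gt 0).inter
    (convex_halfSpace_lt (f := fun s : ℂ => s.re - s.im)
      ⟨fun x y => by simp; ring, fun c x => by simp; ring⟩ 1)
  have hD1 : ∀ s ∈ D, s ≠ 1 := by rintro s ⟨-, h⟩ rfl; simp at h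
  have hG : AnalyticOnNhd ℂ (fun s => ∑' n, zetaTerm s n) D :=
    (differentiableOn_tsum_zetaTerm.mono fun s hs => ⟨hs.1, hD1 s hs⟩).analyticOnNhd hD
  have hζ : AnalyticOnNhd ℂ riemannZeta D := DifferentiableOn.analyticOnNhd
    (fun s hs => (differentiableAt_riemannZeta (hD1 s hs)).differentiableWithinAt) hD
  have h2 : (2 + 2 * I : ℂ) ∈ D := by simp [D]
  refine hG.eqOn_of_preconnected_of_eventuallyEq hζ hDconv.isPreconnected h2 ?_ ⟨hs₀, hs₁⟩
  filter_upwards [(isOpen_lt continuous_const continuous_re).mem_nhds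
    (show (1 : ℝ) < (2 + 2 * I : ℂ).re by simp)] with s hs using tsum_zetaTerm_of_one_lt_re hs

theorem ConvexOn.integral_le_trapezoid {f : ℝ → ℝ} {a b : ℝ} (hab : a ≤ b)
    (hf : ConvexOn ℝ (Icc a b) f) (hint : IntervalIntegrable f volume a b) :
    ∫ x in a..b, f x ≤ (b - a) * (f a + f b) / 2 := by
  rcases hab.eq_or_lt with rfl | hlt
  · simp
  have hba : 0 < b - a := sub_pos.2 hlt
  have hchord : ∀ x ∈ Icc a b, f x ≤ f a + (x - a) * ((f b - f a) / (b - a)) := by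
    intro x hx
    set t := (x - a) / (b - a)
    have h := hf.2 (left_mem_Icc.2 hab) (right_mem_Icc.2 hab)
      (sub_nonneg.2 ((div_le_one hba).2 (by linarith [hx.2])))
      (div_nonneg (sub_nonneg.2 hx.1) hba.le) (sub_add_cancel 1 t)
    have hx' : (1 - t) • a + t • b = x := by simp only [t, smul_eq_mul]; field_simp; ring
    rw [hx', smul_eq_mul, smul_eq_mul] at h
    exact h.trans_eq (by ring)
  have hline : IntervalIntegrable (fun x => f a + (x - a) * ((f b - f a) / (b - a))) volume a b :=
    (by fun_prop : Continuous _).intervalIntegrable a b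
  calc ∫ x in a..b, f x ≤ ∫ x in a..b, f a + (x - a) * ((f b - f a) / (b - a)) :=
        intervalIntegral.integral_mono_on hab hint hline hchord
    _ = (b - a) * (f a + f b) / 2 := by
        rw [intervalIntegral.integral_add intervalIntegrable_const
          ((by fun_prop : Continuous _).intervalIntegrable a b),
          intervalIntegral.integral_mul_const,
          intervalIntegral.integral_comp_sub_right (fun x => x), integral_id,
          intervalIntegral.integral_const]
        field_simp
        ring

theorem convexOn_rpow_of_nonpos {p : ℝ} (hp : p ≤ 0) :
    ConvexOn ℝ (Ioi 0) fun x : ℝ => x ^ p := by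
  refine MonotoneOn.convexOn_of_deriv (convex_Ioi 0) ?_ ?_ ?_
  · exact fun x hx => (Real.continuousAt_rpow_const x p (Or.inl (ne_of_gt hx))).continuousWithinAt
  · rw [interior_Ioi]
    exact fun x hx =>
      (Real.differentiableAt_rpow_const_of_ne p (ne_of_gt hx)).differentiableWithinAt
  · rw [interior_Ioi, Real.deriv_rpow_const']
    intro x hx y hy hxy
    exact mul_le_mul_of_nonpos_left (Real.rpow_le_rpow_of_nonpos hx hxy (by linarith)) hp

noncomputable def zetaApprox (α : ℝ) (N : ℕ) : ℝ :=
  ∑ n ∈ range N, ((n : ℝ) + 1) ^ (-α) - (N : ℝ) ^ (1 - α) / (1 - α)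

section

variable {α : ℝ}

lemma zetaApprox_succ_sub (hα : α < 1) (N : ℕ) :
    zetaApprox α (N + 1) - zetaApprox α N =
      ((N : ℝ) + 1) ^ (-α) - ∫ x in (N : ℝ)..N + 1, x ^ (-α) := by
  rw [integral_rpow (Or.inl (by linarith)), zetaApprox, zetaApprox, sum_range_succ,
    show -α + 1 = 1 - α by ring]
  push_cast
  ring

lemma zetaApprox_succ_le (hα₀ : 0 ≤ α) (hα₁ : α < 1) {N : ℕ} (hN : N ≠ 0) :
    zetaApprox α (N + 1) ≤ zetaApprox α N := by
  have hN0 : (0 : ℝ) < N := by positivity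
  have h := intervalIntegral.integral_mono_on (f := fun _ => ((N : ℝ) + 1) ^ (-α))
    (g := fun x => x ^ (-α)) (by linarith) intervalIntegrable_const
    (intervalIntegral.intervalIntegrable_rpow' (by linarith))
    fun x hx => Real.rpow_le_rpow_of_nonpos (hN0.trans_le hx.1) hx.2 (by linarith)
  simp only [intervalIntegral.integral_const, smul_eq_mul, add_sub_cancel_left, one_mul] at h
  linarith [zetaApprox_succ_sub hα₁ N]

lemma zetaApprox_sub_le_succ (hα₀ : 0 ≤ α) (hα₁ : α < 1) {N : ℕ} (hN : N ≠ 0) :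
    zetaApprox α N - (N : ℝ) ^ (-α) / 2 ≤
      zetaApprox α (N + 1) - ((N + 1 : ℕ) : ℝ) ^ (-α) / 2 := by
  have hN0 : (0 : ℝ) < N := by positivity
  have h := ConvexOn.integral_le_trapezoid (f := fun x : ℝ => x ^ (-α)) (a := N) (b := N + 1)
    (by linarith) ((convexOn_rpow_of_nonpos (by linarith)).subset
      (fun x hx => hN0.trans_le hx.1) (convex_Icc _ _))
    (intervalIntegral.intervalIntegrable_rpow' (by linarith))
  push_cast
  linarith [zetaApprox_succ_sub hα₁ N]

lemma ofReal_zetaApprox (hα : α < 1) (N : ℕ) :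
    (zetaApprox α N : ℂ) = ∑ n ∈ range N, zetaTerm α n := by
  rw [sum_range_zetaTerm (by exact_mod_cast hα.ne), zetaApprox]
  push_cast
  congr 1
  · refine sum_congr rfl fun n _ => ?_
    rw [ofReal_cpow (by positivity)]
    push_cast
    rfl
  · rw [ofReal_cpow (by positivity)]
    push_cast
    rfl

lemma tendsto_zetaApprox (hα₀ : 0 < α) (hα₁ : α < 1) :
    Tendsto (zetaApprox α) atTop (𝓝 (zetaR α)) := by
  have h := (summable_zetaTerm (s := α) (by simpa) (by exact_mod_cast hα₁.ne)).hasSum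
  rw [tsum_zetaTerm_eq_riemannZeta (by simpa) (by simpa)] at h
  simpa [← ofReal_zetaApprox hα₁, Function.comp_def, zetaR] using
    (continuous_re.tendsto _).comp h.tendsto_sum_nat

lemma zetaR_le_zetaApprox (hα₀ : 0 < α) (hα₁ : α < 1) {N : ℕ} (hN : N ≠ 0) :
    zetaR α ≤ zetaApprox α N := by
  have hanti : Antitone fun n => zetaApprox α (n + N) := antitone_nat_of_succ_le fun n => by
    rw [add_right_comm]; exact zetaApprox_succ_le hα₀.le hα₁ (by omega)
  simpa using
    hanti.le_of_tendsto ((tendsto_add_atTop_iff_nat N).2 (tendsto_zetaApprox hα₀ hα₁)) 0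

lemma zetaApprox_le (hα₀ : 0 < α) (hα₁ : α < 1) {N : ℕ} (hN : N ≠ 0) :
    zetaApprox α N ≤ zetaR α + (N : ℝ) ^ (-α) / 2 := by
  have hmono : Monotone fun n => zetaApprox α (n + N) - ((n + N : ℕ) : ℝ) ^ (-α) / 2 :=
    monotone_nat_of_le_succ fun n => by
      rw [add_right_comm]; exact zetaApprox_sub_le_succ hα₀.le hα₁ (by omega)
  have hpow : Tendsto (fun n : ℕ => (n : ℝ) ^ (-α) / 2) atTop (𝓝 0) := by
    simpa using ((tendsto_rpow_neg_atTop hα₀).comp tendsto_natCast_atTop_atTop).div_const 2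
  have hlim := (tendsto_add_atTop_iff_nat N).2 ((tendsto_zetaApprox hα₀ hα₁).sub hpow)
  have := hmono.ge_of_tendsto (by simpa using hlim) 0
  simp only [zero_add] at this
  linarith

lemma sum_Icc_rpow_two_mul_sub_one (α : ℝ) (m : ℕ) :
    ∑ k ∈ Icc 1 m, (2 * (k : ℝ) - 1) ^ (-α) =
      ∑ n ∈ range (2 * m), ((n : ℝ) + 1) ^ (-α) -
        2 ^ (-α) * ∑ n ∈ range m, ((n : ℝ) + 1) ^ (-α) := by
  induction m with
  | zero => simp
  | succ m ih =>
    rw [sum_Icc_succ_top (by omega), ih, show 2 * (m + 1) = 2 * m + 1 + 1 by ring,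
      sum_range_succ, sum_range_succ, sum_range_succ,
      show ((2 * m + 1 : ℕ) : ℝ) + 1 = 2 * ((m : ℝ) + 1) by push_cast; ring,
      Real.mul_rpow zero_le_two (by positivity)]
    push_cast
    ring_nf

lemma Wn_eq (α : ℝ) (m : ℕ) :
    Wn α m = 2 ^ α * (zetaApprox α (2 * m) - zetaR α) - (zetaApprox α m - zetaR α) := by
  have h1 : (2 : ℝ) ^ α * 2 ^ (-α) = 1 := by rw [← Real.rpow_add two_pos]; simp
  have h2 : (2 : ℝ) ^ α * (2 * (m : ℝ)) ^ (1 - α) = 2 * (m : ℝ) ^ (1 - α) := by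
    rw [Real.mul_rpow zero_le_two (Nat.cast_nonneg m), ← mul_assoc, ← Real.rpow_add two_pos]
    norm_num
  rw [Wn, sum_Icc_rpow_two_mul_sub_one, zetaApprox, zetaApprox]
  push_cast
  linear_combination (-∑ n ∈ range m, ((n : ℝ) + 1) ^ (-α)) * h1 + h2 / (1 - α)

lemma two_rpow_mul_rpow_neg_two_mul (α : ℝ) {x : ℝ} (hx : 0 ≤ x) :
    (2 : ℝ) ^ α * (2 * x) ^ (-α) = x ^ (-α) := by
  rw [Real.mul_rpow zero_le_two hx, ← mul_assoc, ← Real.rpow_add two_pos]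
  simp

lemma Wn_le (hα₀ : 0 < α) (hα₁ : α < 1) {m : ℕ} (hm : m ≠ 0) :
    Wn α m ≤ (m : ℝ) ^ (-α) / 2 := by
  have hupper := zetaApprox_le hα₀ hα₁ (N := 2 * m) (by omega)
  push_cast at hupper
  have htwo : (2 : ℝ) ^ α * (zetaApprox α (2 * m) - zetaR α) ≤ (m : ℝ) ^ (-α) / 2 := by
    rw [← two_rpow_mul_rpow_neg_two_mul α (Nat.cast_nonneg m), mul_div_assoc]
    exact mul_le_mul_of_nonneg_left (by linarith) (by positivity)
  rw [Wn_eq]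
  linarith [zetaR_le_zetaApprox hα₀ hα₁ hm]

end

theorem stmt11 (α : ℝ) (hα0 : 0 < α) (hα1 : α < 1) (m : ℕ) (hm : 0 < m) :
    (2:ℝ) ^ α * (2 * (m:ℝ) - 1) ^ (-α) - Wn α m > 1 / (2 * (m:ℝ) ^ α) ∧
    |-((2:ℝ) ^ α) * (2 * (m:ℝ) - 1) ^ (-α) + Wn α m| > 1 / (2 * (m:ℝ) ^ α) := by
  have hm0 : (0 : ℝ) < m := by exact_mod_cast hm
  have hrhs : 1 / (2 * (m : ℝ) ^ α) = (m : ℝ) ^ (-α) / 2 := by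
    rw [Real.rpow_neg hm0.le]; field_simp
  have hlead : (m : ℝ) ^ (-α) < 2 ^ α * (2 * (m : ℝ) - 1) ^ (-α) := by
    rw [← two_rpow_mul_rpow_neg_two_mul α hm0.le]
    have hm1 : (1 : ℝ) ≤ m := by exact_mod_cast hm
    exact mul_lt_mul_of_pos_left
      (Real.rpow_lt_rpow_of_neg (by linarith) (by linarith) (by linarith)) (by positivity)
  have hmain : 2 ^ α * (2 * (m : ℝ) - 1) ^ (-α) - Wn α m > 1 / (2 * (m : ℝ) ^ α) := by
    linarith [Wn_le hα0 hα1 hm.ne']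
  have hpos : (0 : ℝ) < 1 / (2 * (m : ℝ) ^ α) := by positivity
  refine ⟨hmain, ?_⟩
  rwa [show -((2 : ℝ) ^ α) * (2 * (m : ℝ) - 1) ^ (-α) + Wn α m =
      -(2 ^ α * (2 * (m : ℝ) - 1) ^ (-α) - Wn α m) by ring, abs_neg, abs_of_pos (by linarith)]
end
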